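/- Let (K,Q) be an admissible pair such that K and Q are Borel sets of positive and finite Lebesgue measure. Then for every continuous potential f : U → ℝ, P_inv(f,K,Q) ≥ limsup_{τ→∞} (1/τ) [ inf_{(x,ω)} ∫₀^τ f(ω(s)) ds + max{0, inf_{(x,ω)} log |det D_x φ_{τ,ω}(x)| } ], where both infima are taken over all pairs (x,ω) ∈ K × 𝒰 with φ(t,x,ω) ∈ Q for all t ∈ [0,τ], and D_x φ_{τ,ω}(x) denotes the derivative of the time-τ map φ_{τ,ω} = φ(τ,·,ω) at x. -/

import Mathlib

open MeasureTheory Filter Topology ENNReal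
open scoped ENNReal

noncomputable section

/-- Admissible controls: measurable functions with values in the control range `U`
almost everywhere. -/
def IsAdmissibleControl {m : ℕ} (U : Set (Fin m → ℝ)) (ω : ℝ → Fin m → ℝ) : Prop :=
  Measurable ω ∧ ∀ᵐ t : ℝ, ω t ∈ U

/-- `φ` is a solution map of the control system `ẋ = F(x, ω(t))` for controls taking values
in `U`: `φ(0,x,ω) = x` and `t ↦ φ(t,x,ω)` is continuous with derivative
`F(φ(t,x,ω), ω(t))` for almost every `t`. -/
def IsSolutionMap {d m : ℕ} (F : (Fin d → ℝ) → (Fin m → ℝ) → Fin d → ℝ)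
    (U : Set (Fin m → ℝ))
    (φ : ℝ → (Fin d → ℝ) → (ℝ → Fin m → ℝ) → Fin d → ℝ) : Prop :=
  (∀ x ω, φ 0 x ω = x) ∧
    ∀ x ω, IsAdmissibleControl U ω →
      Continuous (fun t => φ t x ω) ∧
        ∀ᵐ t : ℝ, HasDerivAt (fun s => φ s x ω) (F (φ t x ω) (ω t)) t

/-- A `(τ,K,Q)`-spanning set of admissible controls. -/
def IsSpanningSet {d m : ℕ} (φ : ℝ → (Fin d → ℝ) → (ℝ → Fin m → ℝ) → Fin d → ℝ)
    (U : Set (Fin m → ℝ)) (K Q : Set (Fin d → ℝ)) (τ : ℝ)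
    (S : Set (ℝ → Fin m → ℝ)) : Prop :=
  (∀ ω ∈ S, IsAdmissibleControl U ω) ∧
    ∀ x ∈ K, ∃ ω ∈ S, ∀ t ∈ Set.Icc (0:ℝ) τ, φ t x ω ∈ Q

/-- An admissible pair `(K,Q)`: `K` and `Q` nonempty, `K` compact, and every point of `K`
can be kept inside `Q` for all positive times by some admissible control. -/
def IsAdmissiblePair {d m : ℕ} (φ : ℝ → (Fin d → ℝ) → (ℝ → Fin m → ℝ) → Fin d → ℝ)
    (U : Set (Fin m → ℝ)) (K Q : Set (Fin d → ℝ)) : Prop :=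
  K.Nonempty ∧ Q.Nonempty ∧ IsCompact K ∧
    ∀ x ∈ K, ∃ ω, IsAdmissibleControl U ω ∧ ∀ t ≥ (0:ℝ), φ t x ω ∈ Q

/-- The quantity `a_τ(f,K,Q)`: the infimum over countable `(τ,K,Q)`-spanning sets `S` of
`∑_{ω ∈ S} e^{∫₀^τ f(ω(t)) dt}` (equal to `+∞` if no countable spanning set exists). -/
def aInv {d m : ℕ} (φ : ℝ → (Fin d → ℝ) → (ℝ → Fin m → ℝ) → Fin d → ℝ)
    (U : Set (Fin m → ℝ)) (K Q : Set (Fin d → ℝ)) (f : (Fin m → ℝ) → ℝ) (τ : ℝ) : ℝ≥0∞ :=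
  ⨅ (S : Set (ℝ → Fin m → ℝ)) (_ : S.Countable) (_ : IsSpanningSet φ U K Q τ S),
    ∑' ω : S, ENNReal.ofReal (Real.exp (∫ t in (0:ℝ)..τ, f (ω.1 t)))

/-- The invariance pressure `P_inv(f,K,Q) = limsup_{τ→∞} (1/τ) log a_τ(f,K,Q)`. -/
def PInv {d m : ℕ} (φ : ℝ → (Fin d → ℝ) → (ℝ → Fin m → ℝ) → Fin d → ℝ)
    (U : Set (Fin m → ℝ)) (K Q : Set (Fin d → ℝ)) (f : (Fin m → ℝ) → ℝ) : EReal :=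
  Filter.limsup (fun τ : ℝ => ((1 / τ : ℝ) : EReal) * (aInv φ U K Q f τ).log) Filter.atTop

set_option maxHeartbeats 2000000 in
/-- Lower bound for the invariance pressure via the determinant of the derivative of the
time-`τ` maps: if `K` and `Q` are Borel sets of positive finite Lebesgue measure forming an
admissible pair, then
`P_inv(f,K,Q) ≥ limsup_{τ→∞} (1/τ)[inf ∫₀^τ f(ω(s)) ds + max{0, inf log |det D_x φ_{τ,ω}(x)|}]`,
where both infima are over `(x,ω) ∈ K × 𝒰` whose trajectory stays in `Q` on `[0,τ]`. -/
theorem pInv_lower_bound_det {d m : ℕ} (F : (Fin d → ℝ) → (Fin m → ℝ) → Fin d → ℝ)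
    (hF : ContDiff ℝ 1 (Function.uncurry F)) (U : Set (Fin m → ℝ)) (hUc : IsCompact U)
    (φ : ℝ → (Fin d → ℝ) → (ℝ → Fin m → ℝ) → Fin d → ℝ) (hφ : IsSolutionMap F U φ)
    (hdiffeo : ∀ (t : ℝ) (ω : ℝ → Fin m → ℝ), IsAdmissibleControl U ω →
      ContDiff ℝ 1 (fun x => φ t x ω) ∧ Function.Bijective (fun x => φ t x ω) ∧
        ContDiff ℝ 1 (Function.invFun (fun x => φ t x ω)))
    (K Q : Set (Fin d → ℝ)) (hKQ : IsAdmissiblePair φ U K Q)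
    (hKm : MeasurableSet K) (hK0 : 0 < volume K) (hKfin : volume K < ⊤)
    (hQm : MeasurableSet Q) (hQ0 : 0 < volume Q) (hQfin : volume Q < ⊤)
    (f : (Fin m → ℝ) → ℝ) (hf : ContinuousOn f U) :
    PInv φ U K Q f ≥
      Filter.limsup (fun τ : ℝ =>
        (((1 / τ) *
          (sInf {v : ℝ | ∃ x ∈ K, ∃ ω : ℝ → Fin m → ℝ, IsAdmissibleControl U ω ∧
              (∀ t ∈ Set.Icc (0:ℝ) τ, φ t x ω ∈ Q) ∧
              v = ∫ s in (0:ℝ)..τ, f (ω s)} +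
            max 0
              (sInf {v : ℝ | ∃ x ∈ K, ∃ ω : ℝ → Fin m → ℝ, IsAdmissibleControl U ω ∧
                (∀ t ∈ Set.Icc (0:ℝ) τ, φ t x ω ∈ Q) ∧
                v = Real.log |LinearMap.det
                  ((fderiv ℝ (fun y => φ τ y ω) x : (Fin d → ℝ) →L[ℝ] Fin d → ℝ) :
                    (Fin d → ℝ) →ₗ[ℝ] Fin d → ℝ)|})) : ℝ) : EReal)) Filter.atTop := by
  classical
  obtain ⟨hKne, hQne, hKcpt, hctrl⟩ := hKQ
  -- a uniform bound for `f` on `U`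
  obtain ⟨M₀, hM₀⟩ := hUc.exists_bound_of_continuousOn hf
  set M : ℝ := max M₀ 0 with hMdef
  have hMnn : (0:ℝ) ≤ M := le_max_right _ _
  have hfb : ∀ u ∈ U, |f u| ≤ M := fun u hu => le_trans (hM₀ u hu) (le_max_left _ _)
  -- a bound for the integrals of the potential along admissible controls
  have hint : ∀ (τ : ℝ), 0 ≤ τ → ∀ ω : ℝ → Fin m → ℝ, IsAdmissibleControl U ω →
      |∫ s in (0:ℝ)..τ, f (ω s)| ≤ M * τ := by
    intro τ hτ ω hω
    rw [intervalIntegral.integral_of_le hτ]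
    have hae : ∀ᵐ s ∂(volume.restrict (Set.Ioc (0:ℝ) τ)), ‖f (ω s)‖ ≤ M := by
      filter_upwards [ae_restrict_of_ae hω.2] with s hs
      simpa [Real.norm_eq_abs] using hfb _ hs
    have hfin : volume (Set.Ioc (0:ℝ) τ) < ⊤ := by
      simp [Real.volume_Ioc]
    have h := norm_setIntegral_le_of_norm_le_const_ae hfin hae
    rw [Real.norm_eq_abs] at h
    calc |∫ s in Set.Ioc (0:ℝ) τ, f (ω s)| ≤ M * (volume (Set.Ioc (0:ℝ) τ)).toReal := h
      _ = M * τ := by rw [Real.volume_Ioc]; simp [ENNReal.toReal_ofReal hτ]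
  set c : ℝ≥0∞ := min 1 (volume K / volume Q) with hcdef
  have hc0 : c ≠ 0 := by
    have h1 : (0:ℝ≥0∞) < volume K / volume Q := ENNReal.div_pos hK0.ne' hQfin.ne
    exact (lt_min one_pos h1).ne'
  have hcT : c ≠ ⊤ := ((min_le_left _ _).trans_lt (by norm_num)).ne
  have hcR : 0 < c.toReal := ENNReal.toReal_pos hc0 hcT
  set CK : ℝ := Real.log c.toReal with hCKdef
  -- the key per-time estimate
  have key : ∀ τ : ℝ, 0 < τ →
      ENNReal.ofReal (Real.exp
        ((sInf {v : ℝ | ∃ x ∈ K, ∃ ω : ℝ → Fin m → ℝ, IsAdmissibleControl U ω ∧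
              (∀ t ∈ Set.Icc (0:ℝ) τ, φ t x ω ∈ Q) ∧
              v = ∫ s in (0:ℝ)..τ, f (ω s)}) +
          max 0
            (sInf {v : ℝ | ∃ x ∈ K, ∃ ω : ℝ → Fin m → ℝ, IsAdmissibleControl U ω ∧
              (∀ t ∈ Set.Icc (0:ℝ) τ, φ t x ω ∈ Q) ∧
              v = Real.log |LinearMap.det
                ((fderiv ℝ (fun y => φ τ y ω) x : (Fin d → ℝ) →L[ℝ] Fin d → ℝ) :
                  (Fin d → ℝ) →ₗ[ℝ] Fin d → ℝ)|}))) * c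
        ≤ aInv φ U K Q f τ := by
    intro τ hτ
    set Aset : Set ℝ := {v : ℝ | ∃ x ∈ K, ∃ ω : ℝ → Fin m → ℝ, IsAdmissibleControl U ω ∧
        (∀ t ∈ Set.Icc (0:ℝ) τ, φ t x ω ∈ Q) ∧
        v = ∫ s in (0:ℝ)..τ, f (ω s)} with hAsetdef
    set Bset : Set ℝ := {v : ℝ | ∃ x ∈ K, ∃ ω : ℝ → Fin m → ℝ, IsAdmissibleControl U ω ∧
        (∀ t ∈ Set.Icc (0:ℝ) τ, φ t x ω ∈ Q) ∧
        v = Real.log |LinearMap.det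
          ((fderiv ℝ (fun y => φ τ y ω) x : (Fin d → ℝ) →L[ℝ] Fin d → ℝ) :
            (Fin d → ℝ) →ₗ[ℝ] Fin d → ℝ)|} with hBsetdef
    set A : ℝ := sInf Aset with hAdef
    set B : ℝ := sInf Bset with hBdef
    have hAbdd : BddBelow Aset := by
      refine ⟨-(M*τ), ?_⟩
      rintro v ⟨x, hx, ω, hωadm, hωQ, rfl⟩
      have h1 := hint τ hτ.le ω hωadm
      have h2 := (abs_le.1 h1).1
      linarith
    rw [aInv]
    refine le_iInf fun S => le_iInf fun hScnt => le_iInf fun hSspan => ?_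
    set Kc : (ℝ → Fin m → ℝ) → Set (Fin d → ℝ) :=
      fun ω => {x | x ∈ K ∧ ∀ t ∈ Set.Icc (0:ℝ) τ, φ t x ω ∈ Q} with hKcdef
    set S' : Set (ℝ → Fin m → ℝ) := {ω | ω ∈ S ∧ (Kc ω).Nonempty} with hS'def
    have hS'sub : S' ⊆ S := fun ω h => h.1
    have hcover : K ⊆ ⋃ ω ∈ S', Kc ω := by
      intro x hx
      obtain ⟨ω, hωS, hωQ⟩ := hSspan.2 x hx
      exact Set.mem_biUnion ⟨hωS, ⟨x, hx, hωQ⟩⟩ ⟨hx, hωQ⟩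
    have hS'ne : S'.Nonempty := by
      obtain ⟨x₀, hx₀⟩ := hKne
      obtain ⟨ω, hωS, hωQ⟩ := hSspan.2 x₀ hx₀
      exact ⟨ω, hωS, ⟨x₀, hx₀, hωQ⟩⟩
    set N : ℝ≥0∞ := ∑' _ : S', (1:ℝ≥0∞) with hNdef
    have hN1 : 1 ≤ N := by
      obtain ⟨ω, hω⟩ := hS'ne
      exact ENNReal.le_tsum (f := fun _ : S' => (1:ℝ≥0∞)) ⟨ω, hω⟩
    have hstep1 : ENNReal.ofReal (Real.exp A) * N ≤
        ∑' ω : S, ENNReal.ofReal (Real.exp (∫ t in (0:ℝ)..τ, f (ω.1 t))) := by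
      have h1 : ∑' ω : S', ENNReal.ofReal (Real.exp (∫ t in (0:ℝ)..τ, f (ω.1 t)))
          ≤ ∑' ω : S, ENNReal.ofReal (Real.exp (∫ t in (0:ℝ)..τ, f (ω.1 t))) :=
        ENNReal.tsum_mono_subtype
          (f := fun ω : ℝ → Fin m → ℝ => ENNReal.ofReal (Real.exp (∫ t in (0:ℝ)..τ, f (ω t))))
          (h := hS'sub)
      refine le_trans ?_ h1
      have h2 : ∀ ω : S', ENNReal.ofReal (Real.exp A) ≤
          ENNReal.ofReal (Real.exp (∫ t in (0:ℝ)..τ, f (ω.1 t))) := by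
        rintro ⟨ω, hωS, x, hxK, hxQ⟩
        refine ENNReal.ofReal_le_ofReal (Real.exp_le_exp.2 ?_)
        exact csInf_le hAbdd ⟨x, hxK, ω, hSspan.1 ω hωS, hxQ, rfl⟩
      calc ENNReal.ofReal (Real.exp A) * N
          = ∑' _ : S', ENNReal.ofReal (Real.exp A) := by
            rw [hNdef]
            conv_lhs => rw [← ENNReal.tsum_mul_left]
            simp
        _ ≤ _ := ENNReal.tsum_le_tsum h2
    rcases le_or_gt B 0 with hB0 | hBpos
    · rw [max_eq_left hB0]
      calc ENNReal.ofReal (Real.exp (A + 0)) * c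
          ≤ ENNReal.ofReal (Real.exp A) * N := by
            rw [add_zero]
            exact mul_le_mul' le_rfl ((min_le_left _ _).trans hN1)
        _ ≤ _ := hstep1
    · have hBbdd : BddBelow Bset := by
        by_contra h
        have hB0' : B = 0 := by rw [hBdef]; exact Real.sInf_of_not_bddBelow h
        exact absurd hB0' hBpos.ne'
      set eB : ℝ≥0∞ := ENNReal.ofReal (Real.exp B) with heBdef
      have heB0 : eB ≠ 0 := (ENNReal.ofReal_pos.2 (Real.exp_pos B)).ne'
      have heBT : eB ≠ ⊤ := ENNReal.ofReal_ne_top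
      have hKω : ∀ ω ∈ S', eB * volume (Kc ω) ≤ volume Q := by
        intro ω hωS'
        have hadm : IsAdmissibleControl U ω := hSspan.1 ω (hS'sub hωS')
        obtain ⟨hC1, hbij, hC1inv⟩ := hdiffeo τ ω hadm
        set F1 : (Fin d → ℝ) → Fin d → ℝ := fun x => φ τ x ω with hF1def
        have hdiff : Differentiable ℝ F1 := hC1.differentiable one_ne_zero
        have hdet_cont : Continuous fun x =>
            |LinearMap.det ((fderiv ℝ F1 x : (Fin d → ℝ) →L[ℝ] Fin d → ℝ) :
              (Fin d → ℝ) →ₗ[ℝ] Fin d → ℝ)| := by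
          have h1 : Continuous fun x => fderiv ℝ F1 x := hC1.continuous_fderiv one_ne_zero
          exact continuous_abs.comp (ContinuousLinearMap.continuous_det.comp h1)
        set D : Set (Fin d → ℝ) := {x | Real.exp B ≤
            |LinearMap.det ((fderiv ℝ F1 x : (Fin d → ℝ) →L[ℝ] Fin d → ℝ) :
              (Fin d → ℝ) →ₗ[ℝ] Fin d → ℝ)|} with hDdef
        have hDmeas : MeasurableSet D :=
          (isClosed_le continuous_const hdet_cont).measurableSet
        have hKD : Kc ω ⊆ D := by
          rintro x ⟨hxK, hxQ⟩
          have hBle : B ≤ Real.log |LinearMap.det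
              ((fderiv ℝ F1 x : (Fin d → ℝ) →L[ℝ] Fin d → ℝ) :
                (Fin d → ℝ) →ₗ[ℝ] Fin d → ℝ)| :=
            csInf_le hBbdd ⟨x, hxK, ω, hadm, hxQ, rfl⟩
          have hdet0 : LinearMap.det
              ((fderiv ℝ F1 x : (Fin d → ℝ) →L[ℝ] Fin d → ℝ) :
                (Fin d → ℝ) →ₗ[ℝ] Fin d → ℝ) ≠ 0 := by
            set g := Function.invFun F1 with hgdef
            have hleft : ∀ y, g (F1 y) = y := fun y => Function.leftInverse_invFun hbij.1 y
            have hgd : Differentiable ℝ g := hC1inv.differentiable one_ne_zero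
            have hcomp : HasFDerivAt (g ∘ F1)
                ((fderiv ℝ g (F1 x)).comp (fderiv ℝ F1 x)) x :=
              (hgd (F1 x)).hasFDerivAt.comp x (hdiff x).hasFDerivAt
            have hidd : (fderiv ℝ g (F1 x)).comp (fderiv ℝ F1 x) =
                ContinuousLinearMap.id ℝ (Fin d → ℝ) := by
              have h2 : HasFDerivAt (g ∘ F1) (ContinuousLinearMap.id ℝ (Fin d → ℝ)) x := by
                have h3 : (g ∘ F1) = fun y => y := funext hleft
                rw [h3]; exact hasFDerivAt_id x
              exact hcomp.unique h2
            have h3 : LinearMap.det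
                ((fderiv ℝ g (F1 x) : (Fin d → ℝ) →L[ℝ] Fin d → ℝ) :
                  (Fin d → ℝ) →ₗ[ℝ] Fin d → ℝ) * LinearMap.det
                ((fderiv ℝ F1 x : (Fin d → ℝ) →L[ℝ] Fin d → ℝ) :
                  (Fin d → ℝ) →ₗ[ℝ] Fin d → ℝ) = 1 := by
              rw [← LinearMap.det_comp, ← ContinuousLinearMap.toLinearMap_comp, hidd,
                ContinuousLinearMap.coe_id, LinearMap.det_id]
            exact right_ne_zero_of_mul_eq_one h3
          have habs : 0 < |LinearMap.det
              ((fderiv ℝ F1 x : (Fin d → ℝ) →L[ℝ] Fin d → ℝ) :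
                (Fin d → ℝ) →ₗ[ℝ] Fin d → ℝ)| := abs_pos.2 hdet0
          show Real.exp B ≤ _
          calc Real.exp B ≤ Real.exp (Real.log _) := Real.exp_le_exp.2 hBle
            _ = _ := Real.exp_log habs
        set T : Set (Fin d → ℝ) := toMeasurable volume (F1 '' Kc ω) with hTdef
        set s' : Set (Fin d → ℝ) := F1 ⁻¹' T ∩ D with hs'def
        have hs'meas : MeasurableSet s' :=
          (hC1.continuous.measurable (measurableSet_toMeasurable _ _)).inter hDmeas
        have hsub : Kc ω ⊆ s' := fun x hx =>
          ⟨subset_toMeasurable _ _ ⟨x, hx, rfl⟩, hKD hx⟩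
        have himgQ : F1 '' Kc ω ⊆ Q := by
          rintro _ ⟨x, hx, rfl⟩
          exact hx.2 τ ⟨hτ.le, le_rfl⟩
        calc eB * volume (Kc ω) ≤ eB * volume s' :=
              mul_le_mul' le_rfl (measure_mono hsub)
          _ = ∫⁻ _ in s', eB ∂volume := (setLIntegral_const s' eB).symm
          _ ≤ ∫⁻ x in s', ENNReal.ofReal
                |LinearMap.det ((fderiv ℝ F1 x : (Fin d → ℝ) →L[ℝ] Fin d → ℝ) :
                  (Fin d → ℝ) →ₗ[ℝ] Fin d → ℝ)| ∂volume := by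
              refine setLIntegral_mono (ENNReal.measurable_ofReal.comp hdet_cont.measurable)
                fun x hx => ?_
              exact ENNReal.ofReal_le_ofReal hx.2
          _ ≤ volume (F1 '' s') :=
              lintegral_abs_det_fderiv_le_addHaar_image volume hs'meas
                (fun x _ => (hdiff x).hasFDerivAt.hasFDerivWithinAt) hbij.1.injOn
          _ ≤ volume T := measure_mono (by rintro _ ⟨x, hx, rfl⟩; exact hx.1)
          _ = volume (F1 '' Kc ω) := measure_toMeasurable _
          _ ≤ volume Q := measure_mono himgQ
      have hμK : volume K ≤ N * (volume Q / eB) := by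
        calc volume K ≤ volume (⋃ ω ∈ S', Kc ω) := measure_mono hcover
          _ ≤ ∑' ω : S', volume (Kc ω) :=
              measure_biUnion_le volume (hScnt.mono hS'sub) Kc
          _ ≤ ∑' _ : S', volume Q / eB := by
              refine ENNReal.tsum_le_tsum fun ω => ?_
              exact (ENNReal.le_div_iff_mul_le (Or.inl heB0) (Or.inl heBT)).2
                (by rw [mul_comm]; exact hKω ω.1 ω.2)
          _ = N * (volume Q / eB) := by
              rw [hNdef, mul_comm]
              conv_rhs => rw [← ENNReal.tsum_mul_left]
              simp
      have hNge : eB * (volume K / volume Q) ≤ N := by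
        have h1 : volume K / volume Q ≤ N / eB := by
          refine (ENNReal.div_le_iff_le_mul (Or.inl hQ0.ne') (Or.inl hQfin.ne)).2 ?_
          calc volume K ≤ N * (volume Q / eB) := hμK
            _ = N / eB * volume Q := by
              rw [div_eq_mul_inv, div_eq_mul_inv]; ring
        calc eB * (volume K / volume Q) ≤ eB * (N / eB) := mul_le_mul' le_rfl h1
          _ = N := ENNReal.mul_div_cancel heB0 heBT
      rw [max_eq_right hBpos.le]
      calc ENNReal.ofReal (Real.exp (A + B)) * c
          = ENNReal.ofReal (Real.exp A) * (eB * c) := by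
            rw [Real.exp_add, ENNReal.ofReal_mul (Real.exp_pos A).le, heBdef, mul_assoc]
        _ ≤ ENNReal.ofReal (Real.exp A) * N := by
            refine mul_le_mul' le_rfl ?_
            exact le_trans (mul_le_mul' le_rfl (min_le_right _ _)) hNge
        _ ≤ _ := hstep1
  -- pass to the limsup
  rw [ge_iff_le]
  set v : ℝ → EReal := fun τ => ((1 / τ : ℝ) : EReal) * (aInv φ U K Q f τ).log with hvdef
  set w : ℝ → EReal := fun τ => (((-CK) / τ : ℝ) : EReal) with hwdef
  have hev : (fun τ : ℝ =>
      (((1 / τ) *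
          (sInf {v : ℝ | ∃ x ∈ K, ∃ ω : ℝ → Fin m → ℝ, IsAdmissibleControl U ω ∧
              (∀ t ∈ Set.Icc (0:ℝ) τ, φ t x ω ∈ Q) ∧
              v = ∫ s in (0:ℝ)..τ, f (ω s)} +
            max 0
              (sInf {v : ℝ | ∃ x ∈ K, ∃ ω : ℝ → Fin m → ℝ, IsAdmissibleControl U ω ∧
                (∀ t ∈ Set.Icc (0:ℝ) τ, φ t x ω ∈ Q) ∧
                v = Real.log |LinearMap.det
                  ((fderiv ℝ (fun y => φ τ y ω) x : (Fin d → ℝ) →L[ℝ] Fin d → ℝ) :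
                    (Fin d → ℝ) →ₗ[ℝ] Fin d → ℝ)|})) : ℝ) : EReal))
      ≤ᶠ[atTop] v + w := by
    filter_upwards [eventually_gt_atTop (0:ℝ)] with τ hτ
    have hkey := key τ hτ
    have hpos : (0:ℝ) < 1 / τ := by positivity
    set A : ℝ := sInf {v : ℝ | ∃ x ∈ K, ∃ ω : ℝ → Fin m → ℝ, IsAdmissibleControl U ω ∧
        (∀ t ∈ Set.Icc (0:ℝ) τ, φ t x ω ∈ Q) ∧
        v = ∫ s in (0:ℝ)..τ, f (ω s)} with hAdef
    set B : ℝ := sInf {v : ℝ | ∃ x ∈ K, ∃ ω : ℝ → Fin m → ℝ, IsAdmissibleControl U ω ∧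
        (∀ t ∈ Set.Icc (0:ℝ) τ, φ t x ω ∈ Q) ∧
        v = Real.log |LinearMap.det
          ((fderiv ℝ (fun y => φ τ y ω) x : (Fin d → ℝ) →L[ℝ] Fin d → ℝ) :
            (Fin d → ℝ) →ₗ[ℝ] Fin d → ℝ)|} with hBdef
    by_cases haT : aInv φ U K Q f τ = ⊤
    · have hv : v τ = ⊤ := by
        rw [hvdef]; dsimp only; rw [haT, ENNReal.log_top, EReal.coe_mul_top_of_pos hpos]
      rw [Pi.add_apply, hv, hwdef]
      dsimp only
      rw [EReal.top_add_coe]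
      exact le_top
    · have ha0 : aInv φ U K Q f τ ≠ 0 := by
        refine ne_of_gt (lt_of_lt_of_le ?_ hkey)
        exact ENNReal.mul_pos (ENNReal.ofReal_pos.2 (Real.exp_pos _)).ne' hc0
      have hlog : (aInv φ U K Q f τ).log =
          ((Real.log (aInv φ U K Q f τ).toReal : ℝ) : EReal) :=
        ENNReal.log_pos_real ha0 haT
      have htoR : Real.exp (A + max 0 B) * c.toReal ≤ (aInv φ U K Q f τ).toReal := by
        have h1 := ENNReal.toReal_mono haT hkey
        rwa [ENNReal.toReal_mul, ENNReal.toReal_ofReal (Real.exp_pos _).le] at h1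
      have hlogR : A + max 0 B + CK ≤ Real.log (aInv φ U K Q f τ).toReal := by
        have h1 : 0 < Real.exp (A + max 0 B) * c.toReal :=
          mul_pos (Real.exp_pos _) hcR
        calc A + max 0 B + CK = Real.log (Real.exp (A + max 0 B) * c.toReal) := by
              rw [Real.log_mul (Real.exp_ne_zero _) hcR.ne', Real.log_exp, hCKdef]
          _ ≤ _ := Real.log_le_log h1 htoR
      have hvw : v τ + w τ =
          (((1/τ) * Real.log (aInv φ U K Q f τ).toReal + (-CK)/τ : ℝ) : EReal) := by
        rw [hvdef, hwdef]; dsimp only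
        rw [hlog, ← EReal.coe_mul, ← EReal.coe_add]
      rw [Pi.add_apply, hvw]
      rw [EReal.coe_le_coe_iff]
      have h2 : A + max 0 B ≤ Real.log (aInv φ U K Q f τ).toReal - CK := by linarith
      calc (1/τ) * (A + max 0 B)
          ≤ (1/τ) * (Real.log (aInv φ U K Q f τ).toReal - CK) :=
            mul_le_mul_of_nonneg_left h2 hpos.le
        _ = 1/τ * Real.log (aInv φ U K Q f τ).toReal + (-CK)/τ := by ring
  have hwlim : Filter.limsup w atTop = 0 := by
    have h1 : Filter.Tendsto (fun τ : ℝ => (-CK)/τ) atTop (nhds (0:ℝ)) :=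
      tendsto_const_nhds.div_atTop tendsto_id
    have h2 : Filter.Tendsto w atTop (nhds ((0:ℝ) : EReal)) := by
      rw [hwdef]
      exact EReal.tendsto_coe.2 h1
    rw [← EReal.coe_zero]
    exact h2.limsup_eq
  calc Filter.limsup _ atTop ≤ Filter.limsup (v + w) atTop := Filter.limsup_le_limsup hev
    _ ≤ Filter.limsup v atTop + Filter.limsup w atTop := by
        refine EReal.limsup_add_le ?_ ?_
        · exact Or.inr (by rw [hwlim]; exact EReal.zero_ne_top)
        · exact Or.inr (by rw [hwlim]; exact EReal.zero_ne_bot)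
    _ = PInv φ U K Q f := by rw [hwlim, add_zero]; rfl
end
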